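/- arXiv:1910.05022 — 4 statements merged into one kernel-verified Lean document; each statement's English description precedes it below -/
import Mathlib

section
/- Let d ≥ 2, n ≥ 1, and let (B_{ij})_{1 ≤ i < j ≤ d} be a family of n × n complex matrices (set B_{ji} := B_{ij}). For a point w in the configuration space C_d = { w ∈ ℂ^d : w_i ≠ w_j for i ≠ j } and a vector u ∈ ℂ^d, define A_w(u) = Σ_{1 ≤ i < j ≤ d} ((u_i − u_j)/(w_i − w_j)) · B_{ij}. Then the Kohno connection d + Σ_{i<j} B_{ij} d(w_i − w_j)/(w_i − w_j) is flat — equivalently (since each scalar one-form d(w_i − w_j)/(w_i − w_j) is closed), the matrices A_w(u) and A_w(v) commute for every w ∈ C_d and every u, v ∈ ℂ^d — if and only if the family (B_{ij}) satisfies the infinitesimal pure braid relations. -/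
/-!
Writing `A_w(u) = ∑ i, u i • H_i` with the Gaudin Hamiltonians
`H_i = ∑_{j ≠ i} B i j / (w i - w j)`, flatness says that the `H_i` commute pairwise.
Under the braid relations, disjoint pairs drop out of `⁅H_i, H_k⁆`, which becomes a sum over
third points `m` of one bracket times the Arnold relation for `w i, w k, w m`, hence vanishes.
Conversely, along a degenerating configuration `c + ε • a` the rescaled `ε • H_i` tends to the
Gaudin Hamiltonian of the cluster `{j | c j = c i}` with positions `a`, and commutation survives
the limit. Clustering `{i, j}` and `{k, l}` gives `⁅B i j, B k l⁆ = 0`; clustering `{i, j, k}`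
in two different shapes gives the triple relations.
-/

open Finset Filter Topology Function

theorem arnold_relation {𝕜 : Type*} [Field 𝕜] {a b c : 𝕜} (hab : a ≠ b) (hbc : b ≠ c)
    (hca : c ≠ a) :
    (a - b)⁻¹ * (b - c)⁻¹ + (b - c)⁻¹ * (c - a)⁻¹ + (c - a)⁻¹ * (a - b)⁻¹ = 0 := by
  have := sub_ne_zero.2 hab
  have := sub_ne_zero.2 hbc
  have := sub_ne_zero.2 hca
  field_simp
  ring

section LieAlgebra

variable {𝕜 L : Type*} [Field 𝕜] [LieRing L] [LieAlgebra 𝕜 L] {x y z : L}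

theorem lie_add_eq_zero_of_add_lie_eq_zero (hx : ⁅x, y + z⁆ = 0) (hz : ⁅x + y, z⁆ = 0) :
    ⁅y, x + z⁆ = 0 := by
  rw [lie_add, add_lie, ← lie_skew x y] at *
  linear_combination (norm := module) hz - hx

theorem arnold_lie_relation (hx : ⁅x, y + z⁆ = 0) (hy : ⁅y, x + z⁆ = 0) {a b c : 𝕜}
    (hab : a ≠ b) (hbc : b ≠ c) (hca : c ≠ a) :
    ((a - b)⁻¹ * (b - c)⁻¹) • ⁅x, z⁆ + ((b - a)⁻¹ * (a - c)⁻¹) • ⁅y, x⁆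
      + ((b - c)⁻¹ * (a - c)⁻¹) • ⁅y, z⁆ = 0 := by
  rw [lie_add, ← lie_skew x y] at hx
  rw [lie_add] at hy
  have hxz : ⁅x, z⁆ = ⁅y, x⁆ := by linear_combination (norm := module) hx
  have hyz : ⁅y, z⁆ = -⁅y, x⁆ := by linear_combination (norm := module) hy
  rw [hxz, hyz, smul_neg, ← sub_eq_add_neg, ← add_smul, ← sub_smul]
  convert zero_smul 𝕜 ⁅y, x⁆ using 2
  rw [show a - c = -(c - a) by ring, show b - a = -(a - b) by ring, inv_neg, inv_neg]
  linear_combination arnold_relation hab hbc hca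

theorem lie_add_eq_zero_of_forall_lie_eq_zero [CharZero 𝕜]
    (h : ∀ p q r : 𝕜, p ≠ q → p ≠ r → q ≠ r →
      ⁅(p - q)⁻¹ • x + (p - r)⁻¹ • y, (q - p)⁻¹ • x + (q - r)⁻¹ • z⁆ = 0) :
    ⁅x, y + z⁆ = 0 := by
  -- Two configurations with non-proportional gaps give independent relations between brackets.
  have h₁ := h 2 1 0 (by norm_num) (by norm_num) (by norm_num)
  have h₂ := h 3 1 0 (by norm_num) (by norm_num) (by norm_num)
  simp only [lie_add, add_lie, lie_smul, smul_lie, lie_self, smul_zero] at h₁ h₂ ⊢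
  norm_num at h₁ h₂
  rw [← lie_skew x y]
  linear_combination (norm := module) (4 : 𝕜) • h₁ - (6 : 𝕜) • h₂

theorem sum_lie_sum_eq_sum_lie {κ : Type*} {s : Finset κ} {f g : κ → L}
    (h : ∀ m ∈ s, ∀ l ∈ s, l ≠ m → ⁅f m, g l⁆ = 0) :
    ⁅∑ m ∈ s, f m, ∑ l ∈ s, g l⁆ = ∑ m ∈ s, ⁅f m, g m⁆ := by
  rw [sum_lie_sum]
  exact sum_congr rfl fun m hm => sum_eq_single_of_mem m hm (h m hm)

end LieAlgebra

variable {ι 𝕜 A : Type*}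

/-- The relations are imposed for all distinct indices, in no particular order; for symmetric
families this is equivalent to the ordered form, see `isInfinitesimalPureBraid_iff`. -/
structure IsInfinitesimalPureBraid {L : Type*} [LieRing L] (B : ι → ι → L) : Prop where
  triple : ∀ i j k, i ≠ j → i ≠ k → j ≠ k → ⁅B i j, B i k + B j k⁆ = 0
  disjoint : ∀ i j k l, i ≠ j → i ≠ k → i ≠ l → j ≠ k → j ≠ l → k ≠ l → ⁅B i j, B k l⁆ = 0

section GaudinHamiltonian

variable [Fintype ι] [Field 𝕜] [AddCommGroup A] [Module 𝕜 A]

/-- The diagonal term `j = i` vanishes because `0⁻¹ = 0`. -/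
def gaudinHamiltonian (B : ι → ι → A) (w : ι → 𝕜) (i : ι) : A :=
  ∑ j, (w i - w j)⁻¹ • B i j

theorem gaudinHamiltonian_eq_add_sum [DecidableEq ι] (B : ι → ι → A) (w : ι → 𝕜) {i k : ι}
    (hik : i ≠ k) :
    gaudinHamiltonian B w i =
      (w i - w k)⁻¹ • B i k + ∑ m ∈ univ \ {i, k}, (w i - w m)⁻¹ • B i m := by
  rw [gaudinHamiltonian, ← sum_sdiff (subset_univ {i, k}), sum_pair hik, sub_self, inv_zero,
    zero_smul, zero_add, add_comm]

theorem sum_lt_div_smul_eq_sum_smul_gaudinHamiltonian [LinearOrder ι] {B : ι → ι → A}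
    (hsym : ∀ i j, B j i = B i j) (w u : ι → 𝕜) :
    ∑ p ∈ univ.filter (fun p : ι × ι => p.1 < p.2),
        ((u p.1 - u p.2) / (w p.1 - w p.2)) • B p.1 p.2
      = ∑ i, u i • gaudinHamiltonian B w i := by
  set f : ι × ι → A := fun p => (u p.1 * (w p.1 - w p.2)⁻¹) • B p.1 p.2
  have hswap : ∑ p ∈ univ.filter (fun p : ι × ι => p.2 < p.1), f p
      = ∑ p ∈ univ.filter (fun p : ι × ι => p.1 < p.2), f p.swap :=
    sum_equiv (Equiv.prodComm ι ι) (by simp) (by simp)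
  have hdiag : ∑ p ∈ univ.filter (fun p : ι × ι => ¬p.1 < p.2), f p
      = ∑ p ∈ univ.filter (fun p : ι × ι => p.2 < p.1), f p := by
    refine (sum_subset (fun p hp => ?_) fun p hp hp' => ?_).symm
    · simp only [mem_filter, mem_univ, true_and] at hp ⊢
      exact hp.not_gt
    · simp only [mem_filter, mem_univ, true_and, not_lt] at hp hp'
      simp [f, le_antisymm hp hp']
  calc _ = ∑ p ∈ univ.filter (fun p : ι × ι => p.1 < p.2), (f p + f p.swap) := by
        refine sum_congr rfl fun p _ => ?_
        simp only [f, Prod.fst_swap, Prod.snd_swap, hsym p.1 p.2, ← add_smul]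
        rw [← neg_sub (w p.1), inv_neg]
        ring_nf
    _ = ∑ p, f p := by
        rw [sum_add_distrib, ← hswap, ← hdiag, sum_filter_add_sum_filter_not]
    _ = _ := by
        simp only [f, gaudinHamiltonian, smul_sum, smul_smul, Fintype.sum_prod_type]

end GaudinHamiltonian

theorem forall_commute_sum_smul_iff [Fintype ι] {R : Type*} [CommSemiring R] [Semiring A]
    [Algebra R A] {H : ι → A} :
    (∀ u v : ι → R, Commute (∑ i, u i • H i) (∑ i, v i • H i)) ↔ ∀ i k, Commute (H i) (H k) := by
  classical
  refine ⟨fun h i k => ?_, fun h u v => ?_⟩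
  · simpa [Pi.single_apply] using h (Pi.single i 1) (Pi.single k 1)
  · exact .sum_left _ _ _ fun i _ => .sum_right _ _ _ fun k _ => ((h i k).smul_left _).smul_right _

theorem lie_gaudinHamiltonian_eq_zero [Fintype ι] [DecidableEq ι] [Field 𝕜] {L : Type*}
    [LieRing L] [LieAlgebra 𝕜 L] {B : ι → ι → L} (hsym : ∀ i j, B j i = B i j)
    (hB : IsInfinitesimalPureBraid B) {w : ι → 𝕜} (hw : Injective w) (i k : ι) :
    ⁅gaudinHamiltonian B w i, gaudinHamiltonian B w k⁆ = 0 := by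
  rcases eq_or_ne i k with rfl | hik
  · exact lie_self _
  have mem_S {m : ι} : m ∈ univ \ {i, k} ↔ m ≠ i ∧ m ≠ k := by simp
  have hdiag : ⁅∑ m ∈ univ \ {i, k}, (w i - w m)⁻¹ • B i m,
      ∑ m ∈ univ \ {i, k}, (w k - w m)⁻¹ • B k m⁆
      = ∑ m ∈ univ \ {i, k}, ((w k - w m)⁻¹ * (w i - w m)⁻¹) • ⁅B i m, B k m⁆ := by
    rw [sum_lie_sum_eq_sum_lie fun m hm l hl hlm => ?_]
    · simp only [smul_lie, lie_smul, smul_smul]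
    rw [mem_S] at hm hl
    rw [smul_lie, lie_smul, hB.disjoint i m k l hm.1.symm hik hl.1.symm hm.2 hlm.symm hl.2.symm,
      smul_zero, smul_zero]
  rw [gaudinHamiltonian_eq_add_sum B w hik, gaudinHamiltonian_eq_add_sum B w hik.symm,
    pair_comm k i, hsym i k, add_lie, lie_add, lie_add, hdiag, smul_lie, lie_smul, lie_self,
    smul_zero, smul_zero, zero_add, smul_lie, lie_sum, sum_lie]
  simp only [smul_lie, lie_smul, smul_smul, smul_sum, ← sum_add_distrib]
  refine sum_eq_zero fun m hm => ?_
  rw [mem_S] at hm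
  have hy := hB.triple i m k hm.1.symm hik hm.2
  rw [hsym k m] at hy
  simpa only [add_assoc] using arnold_lie_relation (hB.triple i k m hik hm.1.symm hm.2.symm) hy
    (hw.ne hik) (hw.ne hm.2.symm) (hw.ne hm.1)

section Degeneration

variable [NormedField 𝕜]

theorem tendsto_add_mul_nhdsNE (x y : 𝕜) :
    Tendsto (fun ε => x + ε * y) (𝓝[≠] 0) (𝓝 x) := by
  have : Continuous fun ε : 𝕜 => x + ε * y := by fun_prop
  exact (this.tendsto' 0 x (by simp)).mono_left nhdsWithin_le_nhds

theorem tendsto_mul_inv_add_mul [DecidableEq 𝕜] (x y : 𝕜) :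
    Tendsto (fun ε => ε * (x + ε * y)⁻¹) (𝓝[≠] 0) (𝓝 (if x = 0 then y⁻¹ else 0)) := by
  split_ifs with hx
  · refine tendsto_const_nhds.congr' (eventually_nhdsWithin_of_forall fun ε hε => ?_)
    simp only [hx, zero_add]
    rw [mul_inv, ← mul_assoc, mul_inv_cancel₀ hε, one_mul]
  · simpa using (tendsto_nhdsWithin_of_tendsto_nhds tendsto_id).mul
      ((tendsto_add_mul_nhdsNE x y).inv₀ hx)

theorem eventually_add_mul_ne_zero {x y : 𝕜} (h : x ≠ 0 ∨ y ≠ 0) :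
    ∀ᶠ ε in 𝓝[≠] 0, x + ε * y ≠ 0 := by
  rcases eq_or_ne x 0 with rfl | hx
  · filter_upwards [self_mem_nhdsWithin] with ε hε
    simpa using And.intro hε (h.resolve_left fun h => h rfl)
  · exact (tendsto_add_mul_nhdsNE x y).eventually_ne hx

theorem eventually_injective_add_smul [Finite ι] {c a : ι → 𝕜}
    (hca : Injective fun m => (c m, a m)) : ∀ᶠ ε in 𝓝[≠] (0 : 𝕜), Injective (c + ε • a) := by
  simp only [injective_iff_pairwise_ne, Pairwise, eventually_all]
  intro i j hij
  have hne : c i - c j ≠ 0 ∨ a i - a j ≠ 0 := by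
    simpa [sub_eq_zero, or_iff_not_imp_left] using hca.ne hij
  filter_upwards [eventually_add_mul_ne_zero hne] with ε hε
  simp only [onFun, Pi.add_apply, Pi.smul_apply, smul_eq_mul]
  contrapose! hε
  linear_combination hε

theorem tendsto_smul_gaudinHamiltonian_add_smul [Fintype ι] [DecidableEq 𝕜] [AddCommGroup A]
    [Module 𝕜 A] [TopologicalSpace A] [ContinuousAdd A] [ContinuousSMul 𝕜 A] (B : ι → ι → A)
    (c a : ι → 𝕜) (i : ι) :
    Tendsto (fun ε : 𝕜 => ε • gaudinHamiltonian B (c + ε • a) i) (𝓝[≠] 0)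
      (𝓝 (∑ j with c j = c i, (a i - a j)⁻¹ • B i j)) := by
  rw [sum_filter]
  simp only [gaudinHamiltonian, smul_sum, smul_smul]
  refine tendsto_finsetSum _ fun j _ => ?_
  have hlim := (tendsto_mul_inv_add_mul (c i - c j) (a i - a j)).smul_const (B i j)
  simp only [sub_eq_zero, eq_comm (a := c i), ite_smul, zero_smul] at hlim
  convert hlim using 3 with ε
  simp only [Pi.add_apply, Pi.smul_apply, smul_eq_mul]
  ring_nf

end Degeneration

theorem Commute.of_tendsto {α : Type*} [Mul A] [TopologicalSpace A] [ContinuousMul A]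
    [T2Space A] {l : Filter α} [l.NeBot] {f g : α → A} {x y : A} (hf : Tendsto f l (𝓝 x))
    (hg : Tendsto g l (𝓝 y)) (h : ∀ᶠ t in l, Commute (f t) (g t)) : Commute x y :=
  tendsto_nhds_unique ((hf.mul hg).congr' (h.mono fun _ ht => ht.eq)) (hg.mul hf)

theorem exists_injective_of_charZero (ι 𝕜 : Type*) [Fintype ι] [Ring 𝕜] [CharZero 𝕜] :
    ∃ e : ι → 𝕜, Injective e :=
  ⟨fun m => ((Fintype.equivFin ι m : ℕ) : 𝕜),
    Nat.cast_injective.comp (Fin.val_injective.comp (Fintype.equivFin ι).injective)⟩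

section Associative

attribute [local instance] LieRing.ofAssociativeRing

variable [Ring A] {B : ι → ι → A}

theorem isInfinitesimalPureBraid_iff [LinearOrder ι] (hsym : ∀ i j, B j i = B i j) :
    IsInfinitesimalPureBraid B ↔
      ((∀ i j k, i < j → j < k →
        Commute (B i j) (B i k + B j k) ∧ Commute (B i j + B i k) (B j k)) ∧
      ∀ i j k l, i ≠ j → i ≠ k → i ≠ l → j ≠ k → j ≠ l → k ≠ l → Commute (B i j) (B k l)) := by
  refine ⟨fun h => ⟨fun i j k hij hjk =>
      ⟨commute_iff_lie_eq.2 (h.triple i j k hij.ne (hij.trans hjk).ne hjk.ne), ?_⟩,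
    fun i j k l hij hik hil hjk hjl hkl =>
      commute_iff_lie_eq.2 (h.disjoint i j k l hij hik hil hjk hjl hkl)⟩,
    fun ⟨hlt, hdisj⟩ => ⟨?_, fun i j k l hij hik hil hjk hjl hkl =>
      (hdisj i j k l hij hik hil hjk hjl hkl).lie_eq⟩⟩
  · have := h.triple j k i hjk.ne hij.ne' (hij.trans hjk).ne'
    rw [hsym i j, hsym i k] at this
    exact (commute_iff_lie_eq.2 this).symm
  have key : ∀ x y z, x < y → z ≠ x → z ≠ y → ⁅B x y, B x z + B y z⁆ = 0 := by
    intro x y z hxy hzx hzy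
    rcases hzx.lt_or_gt with hzx | hxz
    · have := (hlt z x y hzx hxy).2.symm.lie_eq
      rwa [hsym x z, hsym y z] at this
    rcases hzy.lt_or_gt with hzy | hyz
    · obtain ⟨h₁, h₂⟩ := hlt x z y hxz hzy
      have := lie_add_eq_zero_of_add_lie_eq_zero h₁.lie_eq h₂.lie_eq
      rwa [hsym y z] at this
    · exact (hlt x y z hxy hyz).1.lie_eq
  intro a b c hab hac hbc
  rcases hab.lt_or_gt with hab | hba
  · exact key a b c hab hac.symm hbc.symm
  · have := key b a c hba hbc.symm hac.symm
    rwa [hsym a b, add_comm] at this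

variable [Fintype ι]

/-- Flatness of the Kohno connection: by `sum_lt_div_smul_eq_sum_smul_gaudinHamiltonian` and
`forall_commute_sum_smul_iff`, this is the commutation of all `A_w(u)` and `A_w(v)`. -/
def IsKohnoFlat (𝕜 : Type*) [Field 𝕜] [Algebra 𝕜 A] (B : ι → ι → A) : Prop :=
  ∀ w : ι → 𝕜, Injective w → ∀ i k, Commute (gaudinHamiltonian B w i) (gaudinHamiltonian B w k)

theorem isKohnoFlat_of_isInfinitesimalPureBraid [DecidableEq ι] [Field 𝕜] [Algebra 𝕜 A]
    (hsym : ∀ i j, B j i = B i j) (hB : IsInfinitesimalPureBraid B) : IsKohnoFlat 𝕜 B :=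
  fun _ hw i k => commute_iff_lie_eq.2 (lie_gaudinHamiltonian_eq_zero hsym hB hw i k)

namespace IsKohnoFlat

variable [NontriviallyNormedField 𝕜] [Algebra 𝕜 A] [TopologicalSpace A] [IsTopologicalRing A]
  [ContinuousSMul 𝕜 A] [T2Space A]

theorem commute_sum_filter [DecidableEq 𝕜] (hflat : IsKohnoFlat 𝕜 B) {c a : ι → 𝕜}
    (hca : Injective fun m => (c m, a m)) (i k : ι) :
    Commute (∑ j with c j = c i, (a i - a j)⁻¹ • B i j)
      (∑ j with c j = c k, (a k - a j)⁻¹ • B k j) :=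
  .of_tendsto (tendsto_smul_gaudinHamiltonian_add_smul B c a i)
    (tendsto_smul_gaudinHamiltonian_add_smul B c a k)
    ((eventually_injective_add_smul hca).mono fun ε hε =>
      ((hflat _ hε i k).smul_left ε).smul_right ε)

theorem lie_add_eq_zero [CharZero 𝕜] (hflat : IsKohnoFlat 𝕜 B) (hsym : ∀ i j, B j i = B i j)
    {i j k : ι} (hij : i ≠ j) (hik : i ≠ k) (hjk : j ≠ k) :
    ⁅B i j, B i k + B j k⁆ = 0 := by
  classical
  obtain ⟨e, he⟩ := exists_injective_of_charZero ι 𝕜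
  refine lie_add_eq_zero_of_forall_lie_eq_zero (𝕜 := 𝕜) fun p q r hpq hpr hqr => ?_
  -- `i, j, k` collide, with relative positions `p, q, r`; the other points stay apart.
  let S : Finset ι := {i, j, k}
  let c : ι → 𝕜 := fun m => if m ∈ S then 0 else 1
  let a : ι → 𝕜 := fun m => if m = i then p else if m = j then q else if m = k then r else e m
  have hca : Injective fun m => (c m, a m) := by
    intro x y hxy
    simp only [Prod.mk.injEq, c, a, S, mem_insert, mem_singleton] at hxy
    grind
  have hS : ∀ m ∈ S, ({x | c x = c m} : Finset ι) = S := by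
    intro m hm
    ext x
    simp [c, hm]
  have := hflat.commute_sum_filter hca i j
  rw [hS i (by simp [S]), hS j (by simp [S])] at this
  simp [S, sum_insert, hij, hik, hjk, hij.symm, hik.symm, hjk.symm, a, hsym] at this
  exact this.lie_eq

theorem lie_eq_zero [CharZero 𝕜] (hflat : IsKohnoFlat 𝕜 B) {i j k l : ι} (hij : i ≠ j)
    (hik : i ≠ k) (hil : i ≠ l) (hjk : j ≠ k) (hjl : j ≠ l) (hkl : k ≠ l) :
    ⁅B i j, B k l⁆ = 0 := by
  classical
  obtain ⟨e, he⟩ := exists_injective_of_charZero ι 𝕜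
  let c : ι → 𝕜 := fun m => if m = i ∨ m = j then 0 else if m = k ∨ m = l then 1 else 2
  have := hflat.commute_sum_filter (c := c) (fun x y h => he congr(($h).2)) i k
  have hi : ({x | c x = c i} : Finset ι) = {i, j} := by
    ext x
    simp only [c, mem_filter, mem_univ, true_and, mem_insert, mem_singleton]
    grind
  have hk : ({x | c x = c k} : Finset ι) = {k, l} := by
    ext x
    simp only [c, mem_filter, mem_univ, true_and, mem_insert, mem_singleton]
    grind
  rw [hi, hk, sum_pair hij, sum_pair hkl, sub_self, inv_zero, zero_smul, zero_add, sub_self,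
    inv_zero, zero_smul, zero_add,
    Commute.smul_left_iff₀ (inv_ne_zero (sub_ne_zero.2 (he.ne hij))),
    Commute.smul_right_iff₀ (inv_ne_zero (sub_ne_zero.2 (he.ne hkl)))] at this
  exact this.lie_eq

theorem isInfinitesimalPureBraid [CharZero 𝕜] (hflat : IsKohnoFlat 𝕜 B)
    (hsym : ∀ i j, B j i = B i j) : IsInfinitesimalPureBraid B :=
  ⟨fun _ _ _ => hflat.lie_add_eq_zero hsym, fun _ _ _ _ => hflat.lie_eq_zero⟩

end IsKohnoFlat

end Associative

theorem kohno_connection_flat_iff_infinitesimal_pure_braid_general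
    (d n : ℕ)
    (B : Fin d → Fin d → Matrix (Fin n) (Fin n) ℂ)
    (hsym : ∀ i j : Fin d, B j i = B i j) :
    (∀ w : Fin d → ℂ, (∀ i j : Fin d, i ≠ j → w i ≠ w j) →
      ∀ u v : Fin d → ℂ,
        Commute
          (∑ p ∈ Finset.univ.filter (fun p : Fin d × Fin d => p.1 < p.2),
            (((u p.1 - u p.2) / (w p.1 - w p.2)) • B p.1 p.2))
          (∑ p ∈ Finset.univ.filter (fun p : Fin d × Fin d => p.1 < p.2),
            (((v p.1 - v p.2) / (w p.1 - w p.2)) • B p.1 p.2)))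
    ↔
    ((∀ i j k : Fin d, i < j → j < k →
        Commute (B i j) (B i k + B j k) ∧ Commute (B i j + B i k) (B j k)) ∧
      (∀ i j k l : Fin d, i ≠ j → i ≠ k → i ≠ l → j ≠ k → j ≠ l → k ≠ l →
        Commute (B i j) (B k l))) := by
  simp only [sum_lt_div_smul_eq_sum_smul_gaudinHamiltonian hsym, forall_commute_sum_smul_iff,
    ← isInfinitesimalPureBraid_iff hsym]
  refine ⟨fun h => IsKohnoFlat.isInfinitesimalPureBraid (𝕜 := ℂ) (fun w hw => h w fun _ _ => hw.ne)
    hsym, fun h w hw => isKohnoFlat_of_isInfinitesimalPureBraid hsym h w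
      (injective_iff_pairwise_ne.2 fun i j => hw i j)⟩

/-- **Flatness of the Kohno connection ⟺ infinitesimal pure braid relations.**
Let `d ≥ 2`, `n ≥ 1`, and `(B i j)` a symmetric family of `n × n` complex matrices.
For `w` in the configuration space and `u : ℂ^d` set
`A_w(u) = ∑_{i<j} ((u i - u j)/(w i - w j)) • B i j`.  The Kohno connection
`d + ∑_{i<j} B i j d(w i - w j)/(w i - w j)` is flat — equivalently, `A_w(u)` and `A_w(v)`
commute for all `w` in configuration space and all `u v` — iff the family `(B i j)`
satisfies the infinitesimal pure braid relations. -/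
theorem kohno_connection_flat_iff_infinitesimal_pure_braid
    (d n : ℕ) (hd : 2 ≤ d) (hn : 1 ≤ n)
    (B : Fin d → Fin d → Matrix (Fin n) (Fin n) ℂ)
    (hsym : ∀ i j : Fin d, B j i = B i j) :
    (∀ w : Fin d → ℂ, (∀ i j : Fin d, i ≠ j → w i ≠ w j) →
      ∀ u v : Fin d → ℂ,
        Commute
          (∑ p ∈ Finset.univ.filter (fun p : Fin d × Fin d => p.1 < p.2),
            (((u p.1 - u p.2) / (w p.1 - w p.2)) • B p.1 p.2))
          (∑ p ∈ Finset.univ.filter (fun p : Fin d × Fin d => p.1 < p.2),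
            (((v p.1 - v p.2) / (w p.1 - w p.2)) • B p.1 p.2)))
    ↔
    ((∀ i j k : Fin d, i < j → j < k →
        Commute (B i j) (B i k + B j k) ∧ Commute (B i j + B i k) (B j k)) ∧
      (∀ i j k l : Fin d, i ≠ j → i ≠ k → i ≠ l → j ≠ k → j ≠ l → k ≠ l →
        Commute (B i j) (B k l))) :=
  kohno_connection_flat_iff_infinitesimal_pure_braid_general d n B hsym
end

section
/- The only symmetric flat deformation of the Knizhnik–Zamolodchikov form by a diagonal term is trivial: let d ≥ 3 and λ, μ ∈ ℂ, and on H = (ℂ²)^{⊗d} set B_{ij} = λ Ω_{ij} + μ s₃^{(i)} ∘ s₃^{(j)} for 1 ≤ i < j ≤ d. Then the family (B_{ij}) satisfies the infinitesimal pure braid relations if and only if λμ = 0. -/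
/-- The Pauli matrices `σ₁, σ₂, σ₃`. -/
noncomputable def pauli : Fin 3 → Matrix (Fin 2) (Fin 2) ℂ
  | 0 => !![0, 1; 1, 0]
  | 1 => !![0, -Complex.I; Complex.I, 0]
  | 2 => !![1, 0; 0, -1]

/-- The spin operator `s_ℓ^{(a)}` on `H = (ℂ²)^{⊗d}` (realized concretely as the space of
functions `(Fin d → Fin 2) → ℂ`, with operators written as matrices): it acts as `(1/2)σ_ℓ`
on the `a`-th tensor factor and as the identity on all other factors. -/
noncomputable def spinOp (d : ℕ) (ℓ : Fin 3) (a : Fin d) :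
    Matrix (Fin d → Fin 2) (Fin d → Fin 2) ℂ :=
  Matrix.of fun x y =>
    (1 / 2 : ℂ) * pauli ℓ (x a) (y a) *
      ∏ b ∈ Finset.univ.erase a, (if x b = y b then 1 else 0)

/-- The Knizhnik–Zamolodchikov coefficient operator `Ω_{ij} = ∑_ℓ s_ℓ^{(i)} ∘ s_ℓ^{(j)}`. -/
noncomputable def omegaOp (d : ℕ) (i j : Fin d) :
    Matrix (Fin d → Fin 2) (Fin d → Fin 2) ℂ :=
  ∑ ℓ : Fin 3, spinOp d ℓ i * spinOp d ℓ j

/-- The total spin operator `L_ℓ = ∑_a s_ℓ^{(a)}`. -/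
noncomputable def totalSpin (d : ℕ) (ℓ : Fin 3) :
    Matrix (Fin d → Fin 2) (Fin d → Fin 2) ℂ :=
  ∑ a : Fin d, spinOp d ℓ a

/-- The total spin Casimir `L² = L₁² + L₂² + L₃²`. -/
noncomputable def totalSpinSq (d : ℕ) :
    Matrix (Fin d → Fin 2) (Fin d → Fin 2) ℂ :=
  ∑ ℓ : Fin 3, totalSpin d ℓ * totalSpin d ℓ

/-!
For spin `1/2` the Pauli completeness relation gives `Ω_{ij} = P_{ij}/2 - 1/4`, where `P_{ij}`
exchanges the tensor factors `i` and `j`. Conjugation by a permutation `P_σ` of the factors sends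
`Ω_{ab}` to `Ω_{σa σb}` and `s₃^{(a)}` to `s₃^{(σa)}`, so `P_{ij}`, hence `Ω_{ij}`, commutes with
`B_{ik} + B_{jk}` and with `B_{kl}` for `{i, j} ∩ {k, l} = ∅`. The operators
`Z_{ab} = s₃^{(a)} s₃^{(b)}` are diagonal and commute with each other, which leaves
`[B_{ij}, B_{ik} + B_{jk}] = λμ [Z_{ij}, Ω_{ik} + Ω_{jk}]`, and this last commutator has a nonzero
matrix entry.
-/

open Matrix Equiv

namespace Matrix

variable {ι m n p R : Type*} [Fintype ι] [CommSemiring R]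

def piKronecker (A : ι → Matrix m n R) : Matrix (ι → m) (ι → n) R :=
  of fun x y => ∏ i, A i (x i) (y i)

theorem piKronecker_mul [DecidableEq ι] [Fintype n] (A : ι → Matrix m n R)
    (B : ι → Matrix n p R) : piKronecker A * piKronecker B = piKronecker fun i => A i * B i := by
  ext x y
  simp only [piKronecker, mul_apply, of_apply, ← Finset.prod_mul_distrib]
  rw [Finset.prod_univ_sum (fun _ => Finset.univ) fun i t => A i (x i) t * B i t (y i),
    Fintype.piFinset_univ]

theorem piKronecker_one [DecidableEq ι] [DecidableEq m] :
    piKronecker (fun _ : ι => (1 : Matrix m m R)) = 1 := by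
  ext x y
  simp [piKronecker, one_apply, Finset.prod_boole, funext_iff]

theorem piKronecker_diagonal [DecidableEq m] (v : ι → m → R) :
    piKronecker (fun i => diagonal (v i)) = diagonal fun x => ∏ i, v i (x i) := by
  ext x y
  simp [piKronecker, diagonal_apply, Finset.prod_ite_zero, funext_iff]

end Matrix

theorem Fintype.prod_eq_mul_mul_prod_compl_pair {ι M : Type*} [Fintype ι] [DecidableEq ι]
    [CommMonoid M] {i j : ι} (hij : i ≠ j) (f : ι → M) :
    ∏ b, f b = f i * f j * ∏ b ∈ {i, j}ᶜ, f b := by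
  rw [← Finset.prod_mul_prod_compl {i, j}, Finset.prod_pair hij]

section factorPerm

variable {ι R α : Type*} [Fintype ι] [DecidableEq ι] [CommSemiring R] [Fintype α]
  [DecidableEq α]

variable (R α) in
def factorPerm : Perm ι →* Matrix (ι → α) (ι → α) R where
  toFun σ := of fun x y => if x ∘ σ = y then 1 else 0
  map_one' := by ext x y; simp [one_apply]
  map_mul' σ τ := by
    ext x y
    simp only [mul_apply, of_apply, ite_mul, one_mul, zero_mul, Finset.sum_ite_eq,
      Finset.mem_univ, if_true, Perm.coe_mul, Function.comp_assoc]
    congr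

theorem factorPerm_apply (σ : Perm ι) (x y : ι → α) :
    factorPerm R α σ x y = ∏ b, (1 : Matrix α α R) (x (σ b)) (y b) := by
  simp [factorPerm, one_apply, Finset.prod_boole, funext_iff]

theorem factorPerm_mul_diagonal (σ : Perm ι) (g : (ι → α) → R) :
    factorPerm R α σ * diagonal g = diagonal (fun x => g (x ∘ σ)) * factorPerm R α σ := by
  ext x y
  simp only [mul_diagonal, diagonal_mul, factorPerm, MonoidHom.coe_mk, OneHom.coe_mk, of_apply]
  split_ifs with h
  · rw [h, mul_one, one_mul]
  · rw [zero_mul, mul_zero]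

theorem semiconjBy_factorPerm_swap (σ : Perm ι) (a b : ι) :
    SemiconjBy (factorPerm R α σ) (factorPerm R α (swap a b))
      (factorPerm R α (swap (σ a) (σ b))) := by
  rw [SemiconjBy, ← map_mul, ← map_mul, mul_swap_eq_swap_mul]

end factorPerm

theorem pauli_completeness (p p' q q' : Fin 2) :
    ∑ ℓ, pauli ℓ p p' * pauli ℓ q q' =
      2 * ((1 : Matrix (Fin 2) (Fin 2) ℂ) q p' * (1 : Matrix (Fin 2) (Fin 2) ℂ) p q') -
        (1 : Matrix (Fin 2) (Fin 2) ℂ) p p' * (1 : Matrix (Fin 2) (Fin 2) ℂ) q q' := by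
  fin_cases p <;> fin_cases p' <;> fin_cases q <;> fin_cases q' <;>
    simp [Fin.sum_univ_three, pauli, one_apply] <;> norm_num

section spin

variable {d : ℕ}

theorem spinOp_eq_piKronecker (ℓ : Fin 3) (a : Fin d) :
    spinOp d ℓ a = piKronecker (Pi.mulSingle a ((1 / 2 : ℂ) • pauli ℓ)) := by
  ext x y
  simp only [spinOp, piKronecker, of_apply]
  rw [← Finset.mul_prod_erase Finset.univ _ (Finset.mem_univ a), Pi.mulSingle_eq_same,
    Matrix.smul_apply, smul_eq_mul]
  congr 1
  refine Finset.prod_congr rfl fun b hb => ?_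
  rw [Pi.mulSingle_eq_of_ne (Finset.ne_of_mem_erase hb), one_apply]

theorem omegaOp_eq_factorPerm_swap {i j : Fin d} (hij : i ≠ j) :
    omegaOp d i j = (1 / 2 : ℂ) • factorPerm ℂ (Fin 2) (swap i j) - (1 / 4 : ℂ) • 1 := by
  ext x y
  simp only [omegaOp, spinOp_eq_piKronecker, piKronecker_mul]
  rw [← piKronecker_one]
  simp only [Matrix.sum_apply, Matrix.sub_apply, Matrix.smul_apply,
    smul_eq_mul, factorPerm_apply, piKronecker, of_apply,
    Fintype.prod_eq_mul_mul_prod_compl_pair hij]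
  have hrest : ∀ A B : Matrix (Fin 2) (Fin 2) ℂ, ∏ b ∈ {i, j}ᶜ,
      (Pi.mulSingle i A b * Pi.mulSingle j B b : Matrix (Fin 2) (Fin 2) ℂ) (x b) (y b) =
        ∏ b ∈ {i, j}ᶜ, (1 : Matrix (Fin 2) (Fin 2) ℂ) (x b) (y b) := by
    refine fun A B => Finset.prod_congr rfl fun b hb => ?_
    obtain ⟨hbi, hbj⟩ : b ≠ i ∧ b ≠ j := by simpa using hb
    rw [Pi.mulSingle_eq_of_ne hbi, Pi.mulSingle_eq_of_ne hbj, one_mul]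
  have hswap : ∏ b ∈ {i, j}ᶜ, (1 : Matrix (Fin 2) (Fin 2) ℂ) (x (swap i j b)) (y b) =
      ∏ b ∈ {i, j}ᶜ, (1 : Matrix (Fin 2) (Fin 2) ℂ) (x b) (y b) := by
    refine Finset.prod_congr rfl fun b hb => ?_
    obtain ⟨hbi, hbj⟩ : b ≠ i ∧ b ≠ j := by simpa using hb
    rw [swap_apply_of_ne_of_ne hbi hbj]
  simp only [hrest, hswap, Pi.mulSingle_eq_same, Pi.mulSingle_eq_of_ne hij,
    Pi.mulSingle_eq_of_ne hij.symm, one_mul, mul_one, Matrix.smul_apply, smul_eq_mul]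
  have h := pauli_completeness (x i) (y i) (x j) (y j)
  simp only [Fin.sum_univ_three] at h ⊢
  rw [swap_apply_left, swap_apply_right]
  linear_combination (∏ b ∈ {i, j}ᶜ, (1 : Matrix (Fin 2) (Fin 2) ℂ) (x b) (y b)) / 4 * h

theorem spinOp_two_eq_diagonal (a : Fin d) :
    spinOp d 2 a = diagonal fun x => pauli 2 (x a) (x a) / 2 := by
  have hσ : (1 / 2 : ℂ) • pauli 2 = diagonal fun p => pauli 2 p p / 2 := by
    ext p q
    fin_cases p <;> fin_cases q <;> norm_num [pauli]
  have hsite : Pi.mulSingle a (diagonal fun p => pauli 2 p p / 2) =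
      fun b => diagonal ((Pi.mulSingle a fun p => pauli 2 p p / 2 : Fin d → Fin 2 → ℂ) b) := by
    funext b
    rcases eq_or_ne b a with rfl | hb
    · simp
    · simp [Pi.mulSingle_eq_of_ne hb]
  rw [spinOp_eq_piKronecker, hσ, hsite, piKronecker_diagonal]
  congr 1
  funext x
  rw [Finset.prod_eq_single a (fun b _ hb => by simp [Pi.mulSingle_eq_of_ne hb]) (by simp),
    Pi.mulSingle_eq_same]

theorem semiconjBy_factorPerm_spinOp_two (σ : Perm (Fin d)) (a : Fin d) :
    SemiconjBy (factorPerm ℂ (Fin 2) σ) (spinOp d 2 a) (spinOp d 2 (σ a)) := by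
  rw [SemiconjBy, spinOp_two_eq_diagonal, spinOp_two_eq_diagonal, factorPerm_mul_diagonal]
  rfl

theorem semiconjBy_factorPerm_omegaOp (σ : Perm (Fin d)) {a b : Fin d} (hab : a ≠ b) :
    SemiconjBy (factorPerm ℂ (Fin 2) σ) (omegaOp d a b) (omegaOp d (σ a) (σ b)) := by
  rw [omegaOp_eq_factorPerm_swap hab, omegaOp_eq_factorPerm_swap (σ.injective.ne hab)]
  exact ((semiconjBy_factorPerm_swap σ a b).smul_right _).sub_right
    ((SemiconjBy.one_right _).smul_right _)

theorem commute_spinOp_two (a b : Fin d) : Commute (spinOp d 2 a) (spinOp d 2 b) := by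
  rw [spinOp_two_eq_diagonal, spinOp_two_eq_diagonal]
  exact commute_diagonal _ _

theorem commute_spinOp_two_mul (a b c e : Fin d) :
    Commute (spinOp d 2 a * spinOp d 2 b) (spinOp d 2 c * spinOp d 2 e) :=
  ((commute_spinOp_two a c).mul_right (commute_spinOp_two a e)).mul_left
    ((commute_spinOp_two b c).mul_right (commute_spinOp_two b e))

theorem omegaOp_comm (i j : Fin d) : omegaOp d i j = omegaOp d j i := by
  rcases eq_or_ne i j with rfl | hij
  · rfl
  · rw [omegaOp_eq_factorPerm_swap hij, omegaOp_eq_factorPerm_swap hij.symm, Equiv.swap_comm]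

theorem commute_omegaOp_of_commute_factorPerm_swap {i j : Fin d} (hij : i ≠ j)
    {X : Matrix (Fin d → Fin 2) (Fin d → Fin 2) ℂ}
    (h : Commute (factorPerm ℂ (Fin 2) (swap i j)) X) : Commute (omegaOp d i j) X := by
  rw [omegaOp_eq_factorPerm_swap hij]
  exact (h.smul_left _).sub_left ((Commute.one_left X).smul_left _)

noncomputable def deformedKZ (d : ℕ) (lam mu : ℂ) (i j : Fin d) :
    Matrix (Fin d → Fin 2) (Fin d → Fin 2) ℂ :=
  lam • omegaOp d i j + mu • (spinOp d 2 i * spinOp d 2 j)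

section deformedKZ

variable {lam mu : ℂ}

theorem deformedKZ_comm (i j : Fin d) : deformedKZ d lam mu i j = deformedKZ d lam mu j i := by
  rw [deformedKZ, deformedKZ, omegaOp_comm, (commute_spinOp_two i j).eq]

theorem semiconjBy_factorPerm_deformedKZ (σ : Perm (Fin d)) {a b : Fin d} (hab : a ≠ b) :
    SemiconjBy (factorPerm ℂ (Fin 2) σ) (deformedKZ d lam mu a b)
      (deformedKZ d lam mu (σ a) (σ b)) :=
  ((semiconjBy_factorPerm_omegaOp σ hab).smul_right lam).add_right
    (((semiconjBy_factorPerm_spinOp_two σ a).mul_right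
      (semiconjBy_factorPerm_spinOp_two σ b)).smul_right mu)

theorem commute_omegaOp_deformedKZ_add {i j k : Fin d} (hij : i ≠ j) (hik : i ≠ k)
    (hjk : j ≠ k) :
    Commute (omegaOp d i j) (deformedKZ d lam mu i k + deformedKZ d lam mu j k) := by
  refine commute_omegaOp_of_commute_factorPerm_swap hij ?_
  have h := (semiconjBy_factorPerm_deformedKZ (lam := lam) (mu := mu) (swap i j) hik).add_right
    (semiconjBy_factorPerm_deformedKZ (lam := lam) (mu := mu) (swap i j) hjk)
  rwa [swap_apply_left, swap_apply_right, swap_apply_of_ne_of_ne hik.symm hjk.symm,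
    add_comm (deformedKZ d lam mu j k)] at h

theorem lie_deformedKZ_add {i j k : Fin d} (hij : i ≠ j) (hik : i ≠ k) (hjk : j ≠ k) :
    ⁅deformedKZ d lam mu i j, deformedKZ d lam mu i k + deformedKZ d lam mu j k⁆ =
      (lam * mu) • ⁅spinOp d 2 i * spinOp d 2 j, omegaOp d i k + omegaOp d j k⁆ := by
  set Ω' := omegaOp d i k + omegaOp d j k
  set Z' := spinOp d 2 i * spinOp d 2 k + spinOp d 2 j * spinOp d 2 k
  have hΩ := (commute_omegaOp_deformedKZ_add (lam := lam) (mu := mu) hij hik hjk).eq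
  have hZ : (spinOp d 2 i * spinOp d 2 j) * Z' = Z' * (spinOp d 2 i * spinOp d 2 j) :=
    ((commute_spinOp_two_mul i j i k).add_right (commute_spinOp_two_mul i j j k)).eq
  have hsum : deformedKZ d lam mu i k + deformedKZ d lam mu j k = lam • Ω' + mu • Z' := by
    simp only [deformedKZ, Ω', Z', smul_add]
    abel
  rw [hsum] at hΩ ⊢
  simp only [Ring.lie_def, deformedKZ, add_mul, mul_add, smul_mul_assoc, mul_smul_comm] at hΩ ⊢
  linear_combination (norm := module) lam • hΩ + (mu * mu) • hZ

theorem not_commute_spinOp_two_mul_omegaOp_add {i j k : Fin d} (hij : i ≠ j) (hik : i ≠ k)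
    (hjk : j ≠ k) :
    ¬ Commute (spinOp d 2 i * spinOp d 2 j) (omegaOp d i k + omegaOp d j k) := by
  set x : Fin d → Fin 2 := Pi.single k 1
  set y : Fin d → Fin 2 := Pi.single j 1
  have hxy : x ≠ y := fun h => by simpa [x, y, hjk.symm] using congr_fun h k
  have hxy_ik : x ∘ swap i k ≠ y := fun h => by simpa [x, y, hij] using congr_fun h i
  have hxy_jk : x ∘ swap j k = y := by
    rw [Pi.single_comp_equiv, symm_swap, swap_apply_right]
  intro h
  have hent := congr_fun (congr_fun h.eq x) y
  rw [spinOp_two_eq_diagonal, spinOp_two_eq_diagonal, diagonal_mul_diagonal,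
    omegaOp_eq_factorPerm_swap hik, omegaOp_eq_factorPerm_swap hjk] at hent
  -- only `P_{jk}` contributes to the entry `(x, y)`, and `Z_{ij}` is `1/4` at `x` but `-1/4` at `y`
  norm_num [factorPerm, hxy, hxy_ik, hxy_jk, pauli, x, y, hij, hik, hjk] at hent

theorem commute_deformedKZ_add_iff {i j k : Fin d} (hij : i ≠ j) (hik : i ≠ k) (hjk : j ≠ k) :
    Commute (deformedKZ d lam mu i j) (deformedKZ d lam mu i k + deformedKZ d lam mu j k) ↔
      lam * mu = 0 := by
  rw [commute_iff_lie_eq, lie_deformedKZ_add hij hik hjk, smul_eq_zero,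
    ← commute_iff_lie_eq, or_iff_left (not_commute_spinOp_two_mul_omegaOp_add hij hik hjk)]

theorem commute_deformedKZ_of_pairwise_ne {i j k l : Fin d} (hij : i ≠ j) (hik : i ≠ k)
    (hil : i ≠ l) (hjk : j ≠ k) (hjl : j ≠ l) (hkl : k ≠ l) :
    Commute (deformedKZ d lam mu i j) (deformedKZ d lam mu k l) := by
  have hΩ : Commute (omegaOp d i j) (deformedKZ d lam mu k l) := by
    refine commute_omegaOp_of_commute_factorPerm_swap hij ?_
    have h := semiconjBy_factorPerm_deformedKZ (lam := lam) (mu := mu) (swap i j) hkl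
    rwa [swap_apply_of_ne_of_ne hik.symm hjk.symm,
      swap_apply_of_ne_of_ne hil.symm hjl.symm] at h
  have hZΩ : Commute (spinOp d 2 i * spinOp d 2 j) (omegaOp d k l) := by
    refine (commute_omegaOp_of_commute_factorPerm_swap hkl ?_).symm
    have h := (semiconjBy_factorPerm_spinOp_two (swap k l) i).mul_right
      (semiconjBy_factorPerm_spinOp_two (swap k l) j)
    rwa [swap_apply_of_ne_of_ne hik hil, swap_apply_of_ne_of_ne hjk hjl] at h
  have hZ := commute_spinOp_two_mul i j k l
  exact (hΩ.smul_left lam).add_left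
    (((hZΩ.smul_right lam).add_right (hZ.smul_right mu)).smul_left mu)

end deformedKZ

end spin

/-- **The only symmetric flat deformation of the KZ form by a diagonal term is trivial**:
for `d ≥ 3` and `λ, μ ∈ ℂ`, the family `B_{ij} = λ Ω_{ij} + μ s₃^{(i)} ∘ s₃^{(j)}` on
`(ℂ²)^{⊗d}` satisfies the infinitesimal pure braid relations iff `λμ = 0`. -/
theorem kz_diagonal_deformation_iff (d : ℕ) (hd : 3 ≤ d) (lam mu : ℂ) :
    (∀ B : Fin d → Fin d → Matrix (Fin d → Fin 2) (Fin d → Fin 2) ℂ,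
      (∀ i j : Fin d, B i j = lam • omegaOp d i j + mu • (spinOp d 2 i * spinOp d 2 j)) →
      ((∀ i j k : Fin d, i < j → j < k →
          Commute (B i j) (B i k + B j k) ∧ Commute (B i j + B i k) (B j k)) ∧
        (∀ i j k l : Fin d, i ≠ j → i ≠ k → i ≠ l → j ≠ k → j ≠ l → k ≠ l →
          Commute (B i j) (B k l))))
    ↔ lam * mu = 0 := by
  constructor
  · intro h
    let i : Fin d := ⟨0, by omega⟩
    let j : Fin d := ⟨1, by omega⟩
    let k : Fin d := ⟨2, by omega⟩
    have hij : i < j := Fin.mk_lt_mk.2 zero_lt_one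
    have hjk : j < k := Fin.mk_lt_mk.2 one_lt_two
    exact (commute_deformedKZ_add_iff hij.ne (hij.trans hjk).ne hjk.ne).1
      ((h (deformedKZ d lam mu) fun _ _ => rfl).1 i j k hij hjk).1
  · rintro hlm B hB
    obtain rfl : B = deformedKZ d lam mu := funext₂ hB
    refine ⟨fun i j k hij hjk => ⟨?_, ?_⟩, fun i j k l => commute_deformedKZ_of_pairwise_ne⟩
    · exact (commute_deformedKZ_add_iff hij.ne (hij.trans hjk).ne hjk.ne).2 hlm
    · have h := (commute_deformedKZ_add_iff hjk.ne hij.ne' (hij.trans hjk).ne').2 hlm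
      rw [deformedKZ_comm j i, deformedKZ_comm k i] at h
      exact h.symm
end

section
/- Let d ≥ 1, let S be the d × d matrix with S_{ii} = 1, S_{ij} = 2(−1)^{j−i} for j > i, S_{ij} = 0 for j < i, and let Cox := −(Sᵀ)^{−1} S. If d is odd then Cox² = 1 (so Cox is semisimple with minimal polynomial dividing z² − 1). If d is even then (Cox − 1)² = 0 while Cox ≠ 1, i.e. Cox is unipotent with a single nontrivial Jordan block of size 2 (indeed Cox − 1 has rank 1). -/
open Matrix

/-!
When `S` is invertible and `S + Sᵀ = c • w wᵀ` has rank one, `Cox = -(Sᵀ)⁻¹ S` is the rank-one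
perturbation `1 - c • y wᵀ` of the identity, where `y = (Sᵀ)⁻¹ w`; hence `X = Cox - 1` satisfies
`X² = -(c * (w ⬝ y)) • X`. The scalar is pinned down by comparing two determinants:
`det Cox = (-1)^d` since `det S = det Sᵀ`, while `det (1 - c • y wᵀ) = 1 - c * (w ⬝ y)` by the
matrix determinant lemma. So `c * (w ⬝ y)` is `2` for odd `d`, giving `Cox² = 1`, and `0` for
even `d`, giving `X² = 0`. The Ising Stokes matrix has `S + Sᵀ = 2 • w wᵀ` with `w i = (-1)^i`.
-/

/-- The Stokes matrix of the tt* Riemann–Hilbert problem for the Ising `d`-point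
functions: the upper unitriangular matrix with `S_{ii} = 1`, `S_{ij} = 2(−1)^{j−i}`
for `j > i` and `S_{ij} = 0` for `j < i`. -/
def isingStokes (d : ℕ) : Matrix (Fin d) (Fin d) ℚ :=
  Matrix.of fun i j =>
    if i = j then 1 else if i < j then 2 * (-1 : ℚ) ^ ((j : ℕ) - (i : ℕ)) else 0

/-- The Coxeter element `Cox = −(Sᵀ)⁻¹ S` (minus the 2d quantum monodromy). -/
noncomputable def isingCoxeter (d : ℕ) : Matrix (Fin d) (Fin d) ℚ :=
  -(((isingStokes d)ᵀ)⁻¹ * isingStokes d)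

section

variable {n R : Type*} [Fintype n] [CommRing R]

theorem Matrix.vecMulVec_mul_self (y w : n → R) :
    vecMulVec y w * vecMulVec y w = (w ⬝ᵥ y) • vecMulVec y w := by
  rw [vecMulVec_mul_vecMulVec, vecMulVec_smul]

variable [DecidableEq n]

theorem Matrix.det_one_sub_smul_vecMulVec (c : R) (y w : n → R) :
    (1 - c • vecMulVec y w).det = 1 - c * (w ⬝ᵥ y) := by
  rw [sub_eq_add_neg, ← neg_smul, ← smul_vecMulVec, vecMulVec_eq Unit,
    det_one_add_replicateCol_mul_replicateRow, dotProduct_smul, smul_eq_mul, neg_mul,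
    ← sub_eq_add_neg]

noncomputable def coxeterElement (S : Matrix n n R) : Matrix n n R := -(Sᵀ⁻¹ * S)

variable {S : Matrix n n R} {c : R} {w : n → R}

theorem det_coxeterElement (hS : IsUnit S.det) :
    (coxeterElement S).det = (-1) ^ Fintype.card n := by
  rw [coxeterElement, det_neg, det_mul, det_nonsing_inv, det_transpose,
    Ring.inverse_mul_cancel _ hS, mul_one]

theorem coxeterElement_eq_one_sub (hS : IsUnit S.det) (h : S + Sᵀ = c • vecMulVec w w) :
    coxeterElement S = 1 - c • vecMulVec (Sᵀ⁻¹ *ᵥ w) w := by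
  have hS' : IsUnit Sᵀ.det := by rwa [det_transpose]
  calc -(Sᵀ⁻¹ * S) = -(Sᵀ⁻¹ * (c • vecMulVec w w - Sᵀ)) := by rw [← eq_sub_of_add_eq h]
    _ = 1 - c • vecMulVec (Sᵀ⁻¹ *ᵥ w) w := by
      rw [Matrix.mul_sub, Matrix.mul_smul, mul_vecMulVec, nonsing_inv_mul _ hS', neg_sub]

theorem mul_dotProduct_inv_transpose_mulVec (hS : IsUnit S.det)
    (h : S + Sᵀ = c • vecMulVec w w) :
    c * (w ⬝ᵥ (Sᵀ⁻¹ *ᵥ w)) = 1 - (-1) ^ Fintype.card n := by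
  rw [← det_coxeterElement hS, coxeterElement_eq_one_sub hS h, det_one_sub_smul_vecMulVec]
  ring

theorem coxeterElement_sub_one_sq (hS : IsUnit S.det) (h : S + Sᵀ = c • vecMulVec w w) :
    (coxeterElement S - 1) ^ 2 = -(1 - (-1) ^ Fintype.card n : R) • (coxeterElement S - 1) := by
  rw [← mul_dotProduct_inv_transpose_mulVec hS h, coxeterElement_eq_one_sub hS h,
    sub_sub_cancel_left, neg_sq, sq, smul_mul_smul_comm, vecMulVec_mul_self, smul_smul,
    smul_neg, neg_smul, neg_neg, smul_smul]
  ring_nf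

theorem coxeterElement_sub_one_sq_eq_zero (hS : IsUnit S.det) (h : S + Sᵀ = c • vecMulVec w w)
    (hn : Even (Fintype.card n)) : (coxeterElement S - 1) ^ 2 = 0 := by
  rw [coxeterElement_sub_one_sq hS h, hn.neg_one_pow, sub_self, neg_zero, zero_smul]

theorem coxeterElement_sq_eq_one (hS : IsUnit S.det) (h : S + Sᵀ = c • vecMulVec w w)
    (hn : Odd (Fintype.card n)) : coxeterElement S ^ 2 = 1 := by
  have hX := coxeterElement_sub_one_sq hS h
  rw [hn.neg_one_pow, sub_neg_eq_add, one_add_one_eq_two, neg_smul, two_smul] at hX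
  calc coxeterElement S ^ 2 = (coxeterElement S - 1) ^ 2 + 2 * (coxeterElement S - 1) + 1 := by
        noncomm_ring
    _ = 1 := by rw [hX, two_mul]; abel

end

section

variable {n K : Type*} [Fintype n] [DecidableEq n] [Field K]

theorem Matrix.one_le_rank_of_ne_zero {m : Type*} {A : Matrix m n K} (hA : A ≠ 0) :
    1 ≤ A.rank := by
  rw [Nat.one_le_iff_ne_zero, Matrix.rank, Ne, Submodule.finrank_eq_zero, LinearMap.range_eq_bot]
  exact fun h => hA (Matrix.toLin'.map_eq_zero_iff.mp h)

theorem Matrix.rank_vecMulVec_of_ne_zero {y w : n → K} (hy : y ≠ 0) (hw : w ≠ 0) :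
    (vecMulVec y w).rank = 1 :=
  (rank_vecMulVec_le y w).antisymm (one_le_rank_of_ne_zero (vecMulVec_ne_zero hy hw))

theorem rank_coxeterElement_sub_one {S : Matrix n n K} {c : K} {w : n → K}
    (hS : IsUnit S.det) (h : S + Sᵀ = c • vecMulVec w w) (hc : c ≠ 0) (hw : w ≠ 0) :
    (coxeterElement S - 1).rank = 1 := by
  have hS' : IsUnit Sᵀ.det := by rwa [det_transpose]
  have hy : Sᵀ⁻¹ *ᵥ w ≠ 0 := fun hy => hw <| by
    rw [← one_mulVec w, ← mul_nonsing_inv _ hS', ← mulVec_mulVec, hy, mulVec_zero]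
  rw [coxeterElement_eq_one_sub hS h, sub_sub_cancel_left, ← neg_smul, ← smul_vecMulVec]
  exact rank_vecMulVec_of_ne_zero (smul_ne_zero (neg_ne_zero.mpr hc) hy) hw

end

theorem neg_one_pow_sub_of_le {R : Type*} [Ring R] {i j : ℕ} (hij : i ≤ j) :
    (-1 : R) ^ (j - i) = (-1) ^ i * (-1) ^ j := by
  obtain ⟨k, rfl⟩ := Nat.exists_eq_add_of_le hij
  rw [Nat.add_sub_cancel_left, pow_add, ← mul_assoc, ← pow_add, ← two_mul, pow_mul, neg_one_sq,
    one_pow, one_mul]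

def alternatingSign (d : ℕ) : Fin d → ℚ := fun i => (-1) ^ (i : ℕ)

theorem isingStokes_add_transpose (d : ℕ) :
    isingStokes d + (isingStokes d)ᵀ =
      (2 : ℚ) • vecMulVec (alternatingSign d) (alternatingSign d) := by
  ext i j
  simp only [isingStokes, alternatingSign, Matrix.add_apply, transpose_apply, of_apply,
    Matrix.smul_apply, vecMulVec_apply, smul_eq_mul]
  rcases lt_trichotomy i j with hij | rfl | hij
  · simp [hij.ne, hij.ne', hij.not_gt, hij, neg_one_pow_sub_of_le hij.le]
  · simp [← pow_add, ← two_mul, pow_mul]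
  · simp [hij.ne, hij.ne', hij.not_gt, hij, neg_one_pow_sub_of_le hij.le, mul_comm]

theorem isingStokes_det (d : ℕ) : (isingStokes d).det = 1 := by
  have h : (isingStokes d).IsUpperTriangular := fun i j (hij : j < i) => by
    simp [isingStokes, hij.ne', hij.not_gt]
  rw [det_of_isUpperTriangular h]
  simp [isingStokes]

theorem isingCoxeter_eq_coxeterElement (d : ℕ) :
    isingCoxeter d = coxeterElement (isingStokes d) :=
  rfl

/-- **Jordan structure of the Ising Coxeter element**: if `d` is odd then `Cox² = 1`
(`Cox` is semisimple with minimal polynomial dividing `z² − 1`); if `d` is even then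
`(Cox − 1)² = 0` while `Cox ≠ 1`, i.e. `Cox` is unipotent with a single nontrivial Jordan
block of size 2 (indeed `Cox − 1` has rank `1`). -/
theorem isingCoxeter_jordan_structure (d : ℕ) (hd : 1 ≤ d) :
    (Odd d → isingCoxeter d ^ 2 = 1) ∧
    (Even d → (isingCoxeter d - 1) ^ 2 = 0 ∧ isingCoxeter d ≠ 1 ∧
      (isingCoxeter d - 1).rank = 1) := by
  rw [isingCoxeter_eq_coxeterElement]
  have hS : IsUnit (isingStokes d).det := by rw [isingStokes_det]; exact isUnit_one
  have h := isingStokes_add_transpose d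
  have hw : alternatingSign d ≠ 0 := Function.ne_iff.mpr ⟨⟨0, hd⟩, by simp [alternatingSign]⟩
  have hrank : (coxeterElement (isingStokes d) - 1).rank = 1 :=
    rank_coxeterElement_sub_one hS h two_ne_zero hw
  refine ⟨fun hodd => ?_, fun heven => ⟨?_, fun h1 => ?_, hrank⟩⟩
  · exact coxeterElement_sq_eq_one hS h (by rwa [Fintype.card_fin])
  · exact coxeterElement_sub_one_sq_eq_zero hS h (by rwa [Fintype.card_fin])
  · rw [h1, sub_self, rank_zero] at hrank
    exact zero_ne_one hrank
end

section
/- Arithmetic classification of filling fractions compatible with integrally quantized Knizhnik–Zamolodchikov level: let a, b be coprime positive integers with a ≤ b, and suppose there exist integers κ, m with κ ≠ −2 and a sign ε ∈ {1, −1} such that a(κ + 2) = 2εb + 2mb(κ + 2) (i.e. a/b ≡ ε·2/(κ+2) modulo 2ℤ). Then either a = 1 and κ is even, or a = 2 and both b and κ are odd. Consequently the corresponding filling fractions ν with 1/ν = 2 ± a/b are ν = b/(2b ± 1) (principal series) or ν = b/(2(b ± 1)) with b odd. -/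
/-!
Write `κ + 2 = b t`: coprimality of `a` and `b` forces `b ∣ κ + 2`, and cancelling `b` leaves
`t (a - 2 m b) = 2 ε`, so `|a - 2 m b|` divides `2`. Since `0 < a ≤ b`, the residue of `a`
modulo `2b` of absolute value at most `2` is `a` itself (the only competitor, `a = b = 2`,
is excluded by coprimality). Hence `a |t| = 2`, and the parity of `κ = b t - 2` is read off
from `t = ±2` when `a = 1`, and from `t = ±1` with `b` odd when `a = 2`.
-/

lemma exists_eq_mul_and_mul_sub_eq {a b k m ε : ℤ} (hcop : IsCoprime a b) (hb : b ≠ 0)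
    (heq : a * k = 2 * ε * b + 2 * m * b * k) :
    ∃ t, k = b * t ∧ t * (a - 2 * m * b) = 2 * ε := by
  have hdvd : b ∣ a * k := ⟨2 * ε + 2 * m * k, by linear_combination heq⟩
  obtain ⟨t, rfl⟩ := hcop.symm.dvd_of_dvd_mul_left hdvd
  exact ⟨t, rfl, mul_left_cancel₀ hb (by linear_combination heq)⟩

lemma abs_sub_two_mul_mul_eq_self {a b m : ℤ} (ha : 0 < a) (hab : a ≤ b)
    (hcop : IsCoprime a b) (h : |a - 2 * m * b| ≤ 2) : |a - 2 * m * b| = a := by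
  rcases eq_or_ne m 0 with rfl | hm
  · simpa using ha.le
  have hmb : 2 * b ≤ |2 * m * b| := by
    rw [abs_mul, abs_mul, abs_two, abs_of_pos (ha.trans_le hab)]
    nlinarith [Int.one_le_abs hm]
  have hsum : |2 * m * b| ≤ |a - 2 * m * b| + a := by
    simpa [abs_of_pos ha, abs_sub_comm] using abs_sub_le (2 * m * b) a 0
  have hb2 : b ≤ 2 := by linarith
  have ha2 : a ≤ 2 := hab.trans hb2
  have hm2 : |m| ≤ 1 := by
    rw [abs_mul, abs_mul, abs_two, abs_of_pos (ha.trans_le hab)] at hsum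
    nlinarith
  obtain ⟨hm_lo, hm_hi⟩ := abs_le.mp hm2
  rw [abs_le] at h
  rw [Int.isCoprime_iff_gcd_eq_one] at hcop
  interval_cases a <;> interval_cases b <;> interval_cases m <;> simp_all

theorem filling_fraction_classification_general
    (a b : ℕ) (ha : 0 < a) (hab : a ≤ b) (hcop : Nat.Coprime a b)
    (κ m ε : ℤ) (hε : ε = 1 ∨ ε = -1)
    (heq : (a : ℤ) * (κ + 2) = 2 * ε * (b : ℤ) + 2 * m * (b : ℤ) * (κ + 2)) :
    (a = 1 ∧ Even κ) ∨ (a = 2 ∧ Odd b ∧ Odd κ) := by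
  have hcopZ : IsCoprime (a : ℤ) b := Nat.isCoprime_iff_coprime.mpr hcop
  obtain ⟨t, hκt, ht⟩ := exists_eq_mul_and_mul_sub_eq hcopZ (by omega) heq
  have habs : |t| * |(a : ℤ) - 2 * m * b| = 2 := by
    rw [← abs_mul, ht]; rcases hε with rfl | rfl <;> norm_num
  have hres : |(a : ℤ) - 2 * m * b| = a :=
    abs_sub_two_mul_mul_eq_self (by omega) (by omega) hcopZ
      (Int.le_of_dvd two_pos ⟨|t|, by linarith⟩)
  rw [hres] at habs
  have hκ : κ = b * t - 2 := by linarith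
  have ha2 : a ∣ 2 := Int.natCast_dvd_natCast.mp ⟨|t|, by push_cast; linarith⟩
  rcases (Nat.dvd_prime Nat.prime_two).mp ha2 with rfl | rfl
  · have ht2 : |t| = 2 := by push_cast at habs; omega
    have hteven : Even t := even_abs.mp (ht2 ▸ even_two)
    exact Or.inl ⟨rfl, by rw [hκ]; exact (hteven.mul_left _).sub even_two⟩
  · have ht1 : |t| = 1 := by push_cast at habs; omega
    have htodd : Odd t := odd_abs.mp (ht1 ▸ odd_one)
    have hb : Odd b := Nat.coprime_two_left.mp hcop
    refine Or.inr ⟨rfl, hb, ?_⟩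
    rw [hκ]
    exact ((hb.natCast (R := ℤ)).mul htodd).sub_even even_two

/-- **Arithmetic classification of filling fractions compatible with integrally quantized
Knizhnik–Zamolodchikov level**: let `a, b` be coprime positive integers with `a ≤ b`, and
suppose there are integers `κ, m` with `κ ≠ −2` and a sign `ε ∈ {1, −1}` such that
`a(κ + 2) = 2εb + 2mb(κ + 2)` (i.e. `a/b ≡ ε·2/(κ+2) mod 2ℤ`).  Then either `a = 1` and
`κ` is even, or `a = 2` and both `b` and `κ` are odd.  (Hence the filling fractions
`ν` with `1/ν = 2 ± a/b` are `ν = b/(2b ± 1)` — the principal series — or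
`ν = b/(2(b ± 1))` with `b` odd.) -/
theorem filling_fraction_classification
    (a b : ℕ) (ha : 0 < a) (hb : 0 < b) (hab : a ≤ b) (hcop : Nat.Coprime a b)
    (κ m ε : ℤ) (hε : ε = 1 ∨ ε = -1) (hκ : κ ≠ -2)
    (heq : (a : ℤ) * (κ + 2) = 2 * ε * (b : ℤ) + 2 * m * (b : ℤ) * (κ + 2)) :
    (a = 1 ∧ Even κ) ∨ (a = 2 ∧ Odd b ∧ Odd κ) :=
  filling_fraction_classification_general a b ha hab hcop κ m ε hε heq
end
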